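/- arXiv:1301.5125 — 5 statements merged into one kernel-verified Lean document; each statement's English description precedes it below -/
import Mathlib

section
/- Every C*-dynamical system (α, L), consisting of an endomorphism α of a unital C*-algebra A and a non-degenerate transfer operator L for α, is an interaction; that is, the pair (α, L) satisfies α∘L∘α = α, L∘α∘L = L, α is multiplicative, and L(ab) = L(a)L(b) whenever a or b belongs to α(A). -/
/-!
A positive linear map on a C*-algebra is `*`-preserving, so the transfer identity
`L (α a * b) = a * L b` has the mirror image `L (b * α a) = L b * a`. Non-degeneracy
`α (L 1) = 1` then makes `L 1` a two-sided unit for the range of `L`, and every identity of an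
interaction follows by moving factors from `α(A)` through `L` on one side or the other.
-/

def IsTransferOperator {A F : Type*} [Mul A] [FunLike F A A] (α : F) (L : A → A) : Prop :=
  ∀ a b, L (α a * b) = a * L b

namespace IsTransferOperator

variable {A F : Type*} [Monoid A] [FunLike F A A] {α : F} {L : A → A}

theorem apply_map (hL : IsTransferOperator α L) (a : A) : L (α a) = a * L 1 := by
  simpa using hL a 1

theorem one_mul_apply (hL : IsTransferOperator α L) (hL1 : α (L 1) = 1) (a : A) :
    L 1 * L a = L a := by
  simpa [hL1] using (hL (L 1) a).symm

theorem map_apply_map [MonoidHomClass F A A] (hL : IsTransferOperator α L) (hL1 : α (L 1) = 1)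
    (a : A) : α (L (α a)) = α a := by
  rw [hL.apply_map, map_mul, hL1, mul_one]

theorem apply_mul_of_mem_range_left (hL : IsTransferOperator α L) (hL1 : α (L 1) = 1)
    {a : A} (ha : a ∈ Set.range α) (b : A) : L (a * b) = L a * L b := by
  obtain ⟨c, rfl⟩ := ha
  rw [hL, hL.apply_map, mul_assoc, hL.one_mul_apply hL1]

section Star

variable [StarMul A] [StarHomClass F A A]

theorem apply_mul_map (hL : IsTransferOperator α L) (hLstar : ∀ a, L (star a) = star (L a))
    (a b : A) : L (b * α a) = L b * a := by
  have hstar : b * α a = star (α (star a) * star b) := by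
    rw [star_mul, star_star, map_star, star_star]
  rw [hstar, hLstar, hL, star_mul, ← hLstar, star_star, star_star]

theorem apply_mul_one (hL : IsTransferOperator α L) (hLstar : ∀ a, L (star a) = star (L a))
    (hL1 : α (L 1) = 1) (a : A) : L a * L 1 = L a := by
  simpa [hL1] using (hL.apply_mul_map hLstar (L 1) a).symm

theorem apply_map_apply (hL : IsTransferOperator α L) (hLstar : ∀ a, L (star a) = star (L a))
    (hL1 : α (L 1) = 1) (a : A) : L (α (L a)) = L a := by
  rw [hL.apply_map, hL.apply_mul_one hLstar hL1]

theorem apply_mul_of_mem_range_right (hL : IsTransferOperator α L)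
    (hLstar : ∀ a, L (star a) = star (L a)) (hL1 : α (L 1) = 1)
    (a : A) {b : A} (hb : b ∈ Set.range α) : L (a * b) = L a * L b := by
  obtain ⟨c, rfl⟩ := hb
  rw [hL.apply_map, ← mul_assoc, ← hL.apply_mul_map hLstar c a,
    hL.apply_mul_one hLstar hL1, hL.apply_mul_map hLstar]

end Star

end IsTransferOperator

/-- Every C*-dynamical system `(α, L)`, consisting of a `*`-endomorphism `α` of a unital
C*-algebra `A` and a non-degenerate transfer operator `L` for `α`, is an interaction:
`α∘L∘α = α`, `L∘α∘L = L`, `α` is multiplicative, and `L(ab) = L(a)L(b)` whenever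
`a` or `b` belongs to `α(A)`. -/
theorem cstar_dynamical_system_is_interaction {A : Type*} [CStarAlgebra A] [PartialOrder A]
    [StarOrderedRing A] (α : A →⋆ₐ[ℂ] A) (L : A →L[ℂ] A)
    (hLpos : ∀ a : A, 0 ≤ a → 0 ≤ L a)
    (hTransfer : ∀ a b : A, L (α a * b) = a * L b)
    (hNonDeg : α (L 1) = α 1) :
    (∀ a : A, α (L (α a)) = α a) ∧
    (∀ a : A, L (α (L a)) = L a) ∧
    (∀ a b : A, α (a * b) = α a * α b) ∧
    (∀ a b : A, a ∈ Set.range ⇑α → L (a * b) = L a * L b) ∧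
    (∀ a b : A, b ∈ Set.range ⇑α → L (a * b) = L a * L b) := by
  have hL : IsTransferOperator α L := hTransfer
  have hL1 : α (L 1) = 1 := hNonDeg.trans (map_one α)
  have hLstar : ∀ a, L (star a) = star (L a) :=
    map_star (PositiveLinearMap.mk₀ (L : A →ₗ[ℂ] A) hLpos)
  exact ⟨hL.map_apply_map hL1, hL.apply_map_apply hLstar hL1, map_mul α,
    fun a b ha => hL.apply_mul_of_mem_range_left hL1 ha b,
    fun a b hb => hL.apply_mul_of_mem_range_right hLstar hL1 a hb⟩
end

section
/- For a complete interaction (V, H) over a unital C*-algebra A, the following are equivalent: (i) V is multiplicative (so that (V,H) is a C*-dynamical system); (ii) the kernel of V is a two-sided ideal in A; (iii) H(A) is an ideal in A; (iv) H(1) lies in the center of A. -/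
/-- An interaction over a (unital) C*-algebra `A`. -/
structure Interaction (A : Type*) [CStarAlgebra A] [PartialOrder A] [StarOrderedRing A] where
  V : A →L[ℂ] A
  H : A →L[ℂ] A
  V_pos : ∀ a : A, 0 ≤ a → 0 ≤ V a
  H_pos : ∀ a : A, 0 ≤ a → 0 ≤ H a
  VHV : ∀ a : A, V (H (V a)) = V a
  HVH : ∀ a : A, H (V (H a)) = H a
  V_mul_left : ∀ a b : A, a ∈ Set.range H → V (a * b) = V a * V b
  V_mul_right : ∀ a b : A, b ∈ Set.range H → V (a * b) = V a * V b
  H_mul_left : ∀ a b : A, a ∈ Set.range V → H (a * b) = H a * H b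
  H_mul_right : ∀ a b : A, b ∈ Set.range V → H (a * b) = H a * H b

/-- A complete interaction: `V(A) = V(1)AV(1)` and `H(A) = H(1)AH(1)` are corners. -/
structure CompleteInteraction (A : Type*) [CStarAlgebra A] [PartialOrder A]
    [StarOrderedRing A] extends Interaction A where
  V_corner : Set.range ⇑V = Set.range (fun a : A => V 1 * a * V 1)
  H_corner : Set.range ⇑H = Set.range (fun a : A => H 1 * a * H 1)

/-!
With `e = H 1`, the corner conditions force `e` to be a projection: `H (V 1) = e²` and,
symmetrically, `V (H 1) = (V 1)²`, so `e⁴ = H (V 1 * V 1) = H (V (H 1)) = e`, and a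
self-adjoint element with `e⁴ = e` has spectrum in `{0, 1}`. Then `H ∘ V` is the compression
`a ↦ e a e`, so `ker V = {a | e a e = 0}` and `H(A) = e A e`, and each of the conditions is
equivalent to `e` being central. If `e` is central, `e a b e = (e a e) (e b e)` and `e A e = A e`
is an ideal. Conversely, if `ker V` is a right ideal, then `d = (1 - e) b e` has
`d⋆ d = e (d⋆ b) e = 0` because `e d⋆ e = 0`; hence `b e = e b e` for every `b`, and taking
adjoints, `e b = b e`.
-/

theorem IsSelfAdjoint.isIdempotentElem_of_pow_four_eq_self {A : Type*} [CStarAlgebra A]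
    {e : A} (he : IsSelfAdjoint e) (h4 : e ^ 4 = e) : IsIdempotentElem e := by
  rw [isIdempotentElem_iff_spectrum_subset ℝ e he]
  intro x hx
  have hspec : (spectrum ℝ e).EqOn (· ^ 4) (· ^ 1) :=
    eqOn_of_cfc_eq_cfc (by rw [cfc_pow_id e 4 he, cfc_pow_id e 1 he, h4, pow_one])
  have hx4 : x ^ 4 = x ^ 1 := hspec hx
  have hq : x ^ 2 + x + 1 ≠ 0 := by nlinarith [sq_nonneg (x + 1 / 2)]
  have hfactor : x * (x - 1) * (x ^ 2 + x + 1) = 0 := by linear_combination hx4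
  simp only [mul_eq_zero, hq, or_false, sub_eq_zero] at hfactor
  exact hfactor

theorem IsStarProjection.commute_of_forall_mul_mul_eq_zero {R : Type*} [NormedRing R] [StarRing R]
    [CStarRing R] {e : R} (he : IsStarProjection e)
    (hker : ∀ a b : R, e * a * e = 0 → e * (a * b) * e = 0) (b : R) : Commute e b := by
  have right_compress : ∀ c : R, c * e = e * c * e := by
    intro c
    set d := (1 - e) * c * e
    have hd : star d = e * star c * (1 - e) := by
      simp [d, mul_assoc, he.isSelfAdjoint.star_eq, star_sub]
    have hcorner : e * star d * e = 0 := by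
      rw [hd, mul_assoc, mul_assoc, he.one_sub_mul_self, mul_zero, mul_zero]
    have : star d * d = 0 := by
      rw [← hker _ c hcorner, hd]
      simp only [d, mul_assoc, he.isIdempotentElem.mul_self_mul,
        he.one_sub.isIdempotentElem.mul_self_mul]
    have hd0 : (1 - e) * c * e = 0 := (CStarRing.star_mul_self_eq_zero_iff _).mp this
    rwa [sub_mul, one_mul, sub_mul, sub_eq_zero] at hd0
  calc e * b = star (star b * e) := by simp [he.isSelfAdjoint.star_eq]
    _ = b * e := by
      rw [right_compress, right_compress b]
      simp [he.isSelfAdjoint.star_eq, mul_assoc]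

namespace Interaction

variable {A : Type*} [CStarAlgebra A] [PartialOrder A] [StarOrderedRing A] (I : Interaction A)

def swap : Interaction A where
  V := I.H
  H := I.V
  V_pos := I.H_pos
  H_pos := I.V_pos
  VHV := I.HVH
  HVH := I.VHV
  V_mul_left := I.H_mul_left
  V_mul_right := I.H_mul_right
  H_mul_left := I.V_mul_left
  H_mul_right := I.V_mul_right

theorem isSelfAdjoint_H_one : IsSelfAdjoint (I.H 1) :=
  .of_nonneg (I.H_pos 1 zero_le_one)

theorem H_V_one_mul_H_one : I.H (I.V 1) * I.H 1 = I.H (I.V 1) := by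
  rw [← I.H_mul_left _ _ ⟨1, rfl⟩, mul_one]

theorem H_one_mul_H_V_one : I.H 1 * I.H (I.V 1) = I.H (I.V 1) := by
  rw [← I.H_mul_right _ _ ⟨1, rfl⟩, one_mul]

end Interaction

namespace CompleteInteraction

variable {A : Type*} [CStarAlgebra A] [PartialOrder A] [StarOrderedRing A]
  (I : CompleteInteraction A)

def swap : CompleteInteraction A where
  toInteraction := I.toInteraction.swap
  V_corner := I.H_corner
  H_corner := I.V_corner

theorem H_one_mul_H_V_mul_H_one (a : A) :
    I.H 1 * I.H (I.V a) * I.H 1 = I.H 1 * a * I.H 1 := by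
  obtain ⟨c, hc⟩ : I.H 1 * a * I.H 1 ∈ Set.range I.H := I.H_corner ▸ ⟨a, rfl⟩
  calc I.H 1 * I.H (I.V a) * I.H 1
      = I.H (I.V (I.H 1) * I.V a * I.V (I.H 1)) := by
        rw [I.H_mul_right _ _ ⟨_, rfl⟩, I.H_mul_left _ _ ⟨_, rfl⟩, I.HVH]
    _ = I.H (I.V (I.H 1 * a * I.H 1)) := by
        rw [I.V_mul_right _ _ ⟨1, rfl⟩, I.V_mul_left _ _ ⟨1, rfl⟩]
    _ = I.H 1 * a * I.H 1 := by rw [← hc, I.HVH]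

theorem H_V_one : I.H (I.V 1) = I.H 1 * I.H 1 := by
  simpa only [mul_one, I.H_V_one_mul_H_one, I.H_one_mul_H_V_one] using
    I.H_one_mul_H_V_mul_H_one 1

theorem V_H_one : I.V (I.H 1) = I.V 1 * I.V 1 :=
  I.swap.H_V_one

theorem H_one_pow_four : I.H 1 ^ 4 = I.H 1 := by
  rw [show I.H 1 ^ 4 = I.H 1 * I.H 1 * (I.H 1 * I.H 1) by noncomm_ring, ← I.H_V_one,
    ← I.H_mul_left _ _ ⟨1, rfl⟩, ← I.V_H_one, I.HVH]

theorem isStarProjection_H_one : IsStarProjection (I.H 1) :=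
  ⟨I.isSelfAdjoint_H_one.isIdempotentElem_of_pow_four_eq_self I.H_one_pow_four,
    I.isSelfAdjoint_H_one⟩

theorem H_V (a : A) : I.H (I.V a) = I.H 1 * a * I.H 1 := by
  obtain ⟨c, hc⟩ : I.H (I.V a) ∈ Set.range (fun c => I.H 1 * c * I.H 1) :=
    I.H_corner ▸ ⟨I.V a, rfl⟩
  have he := I.isStarProjection_H_one.isIdempotentElem
  rw [← I.H_one_mul_H_V_mul_H_one, ← hc]
  simp only [mul_assoc, he.mul_self_mul, he.eq]

theorem mem_range_H_iff {x : A} : x ∈ Set.range I.H ↔ I.H 1 * x * I.H 1 = x :=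
  ⟨fun ⟨y, hy⟩ => hy ▸ (I.H_V _).symm.trans (I.HVH y), fun hx => ⟨I.V x, (I.H_V x).trans hx⟩⟩

theorem V_H_one_mul_mul_H_one (a : A) : I.V (I.H 1 * a * I.H 1) = I.V a := by
  rw [← I.H_V, I.VHV]

theorem V_eq_zero_iff {a : A} : I.V a = 0 ↔ I.H 1 * a * I.H 1 = 0 :=
  ⟨fun h => by rw [← I.H_V, h, map_zero], fun h => by rw [← I.V_H_one_mul_mul_H_one, h, map_zero]⟩

theorem commute_H_one_of_V_eq_zero_mul (h : ∀ a b : A, I.V a = 0 → I.V (a * b) = 0) (b : A) :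
    Commute (I.H 1) b :=
  I.isStarProjection_H_one.commute_of_forall_mul_mul_eq_zero
    (fun a b ha => I.V_eq_zero_iff.mp (h a b (I.V_eq_zero_iff.mpr ha))) b

theorem commute_H_one_of_range_H_mul_mem
    (h : ∀ a b : A, a ∈ Set.range I.H → a * b ∈ Set.range I.H ∧ b * a ∈ Set.range I.H) (b : A) :
    Commute (I.H 1) b := by
  have he := I.isStarProjection_H_one.isIdempotentElem
  obtain ⟨hleft, hright⟩ := h (I.H 1) b ⟨1, rfl⟩
  calc I.H 1 * b = I.H 1 * (I.H 1 * b) * I.H 1 := (I.mem_range_H_iff.mp hleft).symm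
    _ = I.H 1 * (b * I.H 1) * I.H 1 := by simp only [mul_assoc, he.mul_self_mul, he.eq]
    _ = b * I.H 1 := I.mem_range_H_iff.mp hright

section Central

variable {I} (h : ∀ a, Commute (I.H 1) a)
include h

theorem H_one_mul_mul_H_one_of_commute (x : A) : I.H 1 * x * I.H 1 = x * I.H 1 := by
  rw [(h x).eq, mul_assoc, I.isStarProjection_H_one.isIdempotentElem.eq]

theorem V_mul_of_commute_H_one (a b : A) : I.V (a * b) = I.V a * I.V b := by
  have hc := H_one_mul_mul_H_one_of_commute h
  have hsplit : I.H 1 * (a * b) * I.H 1 = I.H 1 * a * I.H 1 * (I.H 1 * b * I.H 1) := by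
    rw [hc, hc, hc, mul_assoc a (I.H 1), ← mul_assoc (I.H 1) b, hc, mul_assoc]
  rw [← I.V_H_one_mul_mul_H_one, hsplit, I.V_mul_left _ _ ⟨I.V a, I.H_V a⟩,
    I.V_H_one_mul_mul_H_one, I.V_H_one_mul_mul_H_one]

theorem range_H_mul_mem_of_commute_H_one {a : A} (ha : a ∈ Set.range I.H) (b : A) :
    a * b ∈ Set.range I.H ∧ b * a ∈ Set.range I.H := by
  have hc := H_one_mul_mul_H_one_of_commute h
  rw [I.mem_range_H_iff, hc] at ha
  simp only [I.mem_range_H_iff, hc]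
  constructor
  · rw [mul_assoc, ← (h b).eq, ← mul_assoc, ha]
  · rw [mul_assoc, ha]

end Central

end CompleteInteraction

/-- For a complete interaction `(V, H)` over a unital C*-algebra `A`, the following are
equivalent: (i) `V` is multiplicative; (ii) `ker V` is a two-sided ideal in `A`;
(iii) `H(A)` is an ideal in `A`; (iv) `H(1)` lies in the center of `A`. -/
theorem complete_interaction_multiplicative_tfae {A : Type*} [CStarAlgebra A] [PartialOrder A]
    [StarOrderedRing A] (I : CompleteInteraction A) :
    ((∀ a b : A, I.V (a * b) = I.V a * I.V b) ↔ (∀ a : A, I.H 1 * a = a * I.H 1)) ∧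
    ((∀ a b : A, I.V a = 0 → I.V (a * b) = 0 ∧ I.V (b * a) = 0) ↔
      (∀ a : A, I.H 1 * a = a * I.H 1)) ∧
    ((∀ a b : A, a ∈ Set.range ⇑I.H →
        a * b ∈ Set.range ⇑I.H ∧ b * a ∈ Set.range ⇑I.H) ↔
      (∀ a : A, I.H 1 * a = a * I.H 1)) := by
  have i_ii (h : ∀ a b : A, I.V (a * b) = I.V a * I.V b) (a b : A) (ha : I.V a = 0) :
      I.V (a * b) = 0 ∧ I.V (b * a) = 0 :=
    ⟨by rw [h, ha, zero_mul], by rw [h, ha, mul_zero]⟩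
  have ii_iv (h : ∀ a b : A, I.V a = 0 → I.V (a * b) = 0 ∧ I.V (b * a) = 0) :=
    I.commute_H_one_of_V_eq_zero_mul fun a b ha => (h a b ha).1
  exact ⟨⟨fun h => ii_iv (i_ii h), I.V_mul_of_commute_H_one⟩,
    ⟨ii_iv, fun h => i_ii (I.V_mul_of_commute_H_one h)⟩,
    ⟨I.commute_H_one_of_range_H_mul_mem,
      fun h a b ha => I.range_H_mul_mem_of_commute_H_one h ha b⟩⟩
end

section
/- Let (α, L) be a complete C*-dynamical system over a unital C*-algebra A, i.e. α is an endomorphism with complete transfer operator L. If there exists a nontrivial ideal I of A with α(I) ⊆ I but α(I) ≠ α(1)Iα(1), then the closed linear span J of elements of the form Σ_{k=0}^n L^k(a_k) with a_k ∈ I is a proper nontrivial ideal of A satisfying α(J) ⊆ J and L(J) ⊆ J. -/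
/-!
Since `α` is unital, completeness says `α ∘ L = id`, and positivity makes `L` a `*`-map, so `L`
satisfies the transfer identity on both sides. With `a * Lᵏ b = Lᵏ (αᵏ a * b)` this makes the
additive span of `⋃ₖ Lᵏ(I)` a two-sided ideal invariant under `α` and `L`, and continuity passes
all of this to its closure `J`. For properness, `αⁿ (Lᵏ b) = αⁿ⁻ᵏ b ∈ I` once `n ≥ k`, so iterates
of the contraction `α`, which fixes `1`, push every element of the span eventually into `I`; an
element of the span close to `1` would thus give an element of the closed ideal `I` close to `1`.
-/

open Function Filter

section Transfer

variable {R : Type*} [Mul R] {α L : R → R}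

theorem mul_iterate_transfer (hT : ∀ a b, L (α a * b) = a * L b) (k : ℕ) (a b : R) :
    a * L^[k] b = L^[k] (α^[k] a * b) := by
  induction k generalizing a b with
  | zero => rfl
  | succ k ih =>
    rw [iterate_succ_apply, ih, ← hT, ← iterate_succ_apply, ← iterate_succ_apply' α]

theorem iterate_transfer_mul (hT : ∀ a b, L (b * α a) = L b * a) (k : ℕ) (a b : R) :
    L^[k] b * a = L^[k] (b * α^[k] a) := by
  induction k generalizing a b with
  | zero => rfl
  | succ k ih =>
    rw [iterate_succ_apply, ih, ← hT, ← iterate_succ_apply, ← iterate_succ_apply' α]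

theorem transfer_mul_right [StarMul R] (hα : ∀ a, α (star a) = star (α a))
    (hL : ∀ a, L (star a) = star (L a)) (hT : ∀ a b, L (α a * b) = a * L b) (a b : R) :
    L (b * α a) = L b * a := by
  simpa only [← hL, ← hα, star_mul, star_star] using congrArg star (hT (star a) (star b))

end Transfer

def transferSpan {R : Type*} [AddGroup R] (L : R → R) (I : Set R) : AddSubgroup R :=
  AddSubgroup.closure (⋃ k : ℕ, (fun a : R => L^[k] a) '' I)

section TransferSpan

variable {R : Type*} [NonUnitalNonAssocRing R] {L : R → R} {I : TwoSidedIdeal R}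

theorem iterate_mem_transferSpan {b : R} (hb : b ∈ I) (k : ℕ) : L^[k] b ∈ transferSpan L I :=
  AddSubgroup.subset_closure (Set.mem_iUnion.2 ⟨k, b, hb, rfl⟩)

theorem transferSpan_le_comap {F : Type*} [FunLike F R R] [AddMonoidHomClass F R R] (f : F)
    (hf : ∀ k, ∀ b ∈ I, f (L^[k] b) ∈ transferSpan L I) :
    transferSpan L I ≤ (transferSpan L I).comap (f : R →+ R) := by
  rw [transferSpan, AddSubgroup.closure_le]
  rintro _ ⟨_, ⟨k, rfl⟩, b, hb, rfl⟩
  exact hf k b hb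

theorem mul_mem_transferSpan_left {α : R → R} (hT : ∀ a b, L (α a * b) = a * L b) (a : R)
    {g : R} (hg : g ∈ transferSpan L I) : a * g ∈ transferSpan L I :=
  transferSpan_le_comap (AddMonoidHom.mulLeft a) (fun k b hb => by
    simpa only [AddMonoidHom.coe_mulLeft, mul_iterate_transfer hT] using
      iterate_mem_transferSpan (I.mul_mem_left _ _ hb) k) hg

theorem mul_mem_transferSpan_right {α : R → R} (hT : ∀ a b, L (b * α a) = L b * a) (a : R)
    {g : R} (hg : g ∈ transferSpan L I) : g * a ∈ transferSpan L I :=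
  transferSpan_le_comap (AddMonoidHom.mulRight a) (fun k b hb => by
    simpa only [AddMonoidHom.coe_mulRight, iterate_transfer_mul hT] using
      iterate_mem_transferSpan (I.mul_mem_right _ _ hb) k) hg

theorem map_mem_transferSpan {F : Type*} [FunLike F R R] [AddMonoidHomClass F R R] {α : F}
    (hαL : LeftInverse α L) (hαI : Set.MapsTo α I I) {g : R} (hg : g ∈ transferSpan L I) :
    α g ∈ transferSpan L I :=
  transferSpan_le_comap α (fun k b hb => by
    cases k with
    | zero => exact iterate_mem_transferSpan (hαI hb) 0
    | succ k => simpa only [iterate_succ_apply', hαL _] using iterate_mem_transferSpan hb k) hg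

theorem apply_mem_transferSpan {F : Type*} [FunLike F R R] [AddMonoidHomClass F R R] {L : F}
    {g : R} (hg : g ∈ transferSpan L I) : L g ∈ transferSpan L I :=
  transferSpan_le_comap L (fun k b hb => by
    simpa only [← iterate_succ_apply'] using iterate_mem_transferSpan hb (k + 1)) hg

theorem eventually_iterate_mem_of_mem_transferSpan {F : Type*} [FunLike F R R]
    [AddMonoidHomClass F R R] {α : F} (hαL : LeftInverse α L) (hαI : Set.MapsTo α I I) {g : R}
    (hg : g ∈ transferSpan L I) :
    ∀ᶠ n in atTop, α^[n] g ∈ I := by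
  induction hg using AddSubgroup.closure_induction with
  | mem _ hs =>
    obtain ⟨_, ⟨k, rfl⟩, b, hb, rfl⟩ := hs
    filter_upwards [eventually_ge_atTop k] with n hn
    obtain ⟨m, rfl⟩ := Nat.exists_eq_add_of_le' hn
    rw [iterate_add_apply, (hαL.iterate k) b]
    exact hαI.iterate m hb
  | zero => exact Eventually.of_forall fun n => by simp [I.zero_mem]
  | add _ _ _ _ hx hy =>
    filter_upwards [hx, hy] with n hxn hyn
    simpa only [iterate_map_add] using I.add_mem hxn hyn
  | neg _ _ hx =>
    filter_upwards [hx] with n hxn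
    simpa only [iterate_map_neg] using I.neg_mem hxn

end TransferSpan

theorem mem_of_mem_closure_of_iterate_mem {X : Type*} [PseudoMetricSpace X] {f : X → X}
    (hf : LipschitzWith 1 f) {p : X} (hp : f p = p) {S I : Set X} (hI : IsClosed I)
    (hS : ∀ x ∈ S, ∃ n, f^[n] x ∈ I) (h : p ∈ closure S) : p ∈ I := by
  rw [← hI.closure_eq, Metric.mem_closure_iff]
  intro ε hε
  obtain ⟨x, hx, hpx⟩ := Metric.mem_closure_iff.1 h ε hε
  obtain ⟨n, hn⟩ := hS x hx
  refine ⟨_, hn, ?_⟩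
  calc dist p (f^[n] x) = dist (f^[n] p) (f^[n] x) := by rw [iterate_fixed hp]
    _ ≤ dist p x := by simpa using (hf.iterate n).dist_le_mul p x
    _ < ε := hpx

theorem complete_system_noninvariant_ideal_general {A : Type*} [CStarAlgebra A] [PartialOrder A]
    [StarOrderedRing A] (α : A →⋆ₐ[ℂ] A) (L : A →L[ℂ] A)
    (hLpos : ∀ a : A, 0 ≤ a → 0 ≤ L a)
    (hTransfer : ∀ a b : A, L (α a * b) = a * L b)
    (hComplete : ∀ a : A, α (L a) = α 1 * a * α 1)
    (I : TwoSidedIdeal A) (hIclosed : IsClosed (I : Set A))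
    (hIne : ∃ x ∈ I, x ≠ (0 : A)) (hIproper : (1 : A) ∉ I)
    (hinv : ∀ x ∈ I, α x ∈ I) :
    (∀ x ∈ closure (↑(AddSubgroup.closure
        (⋃ k : ℕ, (fun a : A => (⇑L)^[k] a) '' (I : Set A))) : Set A), ∀ a : A,
        a * x ∈ closure (↑(AddSubgroup.closure
          (⋃ k : ℕ, (fun a : A => (⇑L)^[k] a) '' (I : Set A))) : Set A) ∧
        x * a ∈ closure (↑(AddSubgroup.closure
          (⋃ k : ℕ, (fun a : A => (⇑L)^[k] a) '' (I : Set A))) : Set A)) ∧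
    (∃ x ∈ closure (↑(AddSubgroup.closure
        (⋃ k : ℕ, (fun a : A => (⇑L)^[k] a) '' (I : Set A))) : Set A), x ≠ (0 : A)) ∧
    (1 : A) ∉ closure (↑(AddSubgroup.closure
        (⋃ k : ℕ, (fun a : A => (⇑L)^[k] a) '' (I : Set A))) : Set A) ∧
    (∀ x ∈ closure (↑(AddSubgroup.closure
        (⋃ k : ℕ, (fun a : A => (⇑L)^[k] a) '' (I : Set A))) : Set A),
      α x ∈ closure (↑(AddSubgroup.closure
        (⋃ k : ℕ, (fun a : A => (⇑L)^[k] a) '' (I : Set A))) : Set A)) ∧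
    (∀ x ∈ closure (↑(AddSubgroup.closure
        (⋃ k : ℕ, (fun a : A => (⇑L)^[k] a) '' (I : Set A))) : Set A),
      L x ∈ closure (↑(AddSubgroup.closure
        (⋃ k : ℕ, (fun a : A => (⇑L)^[k] a) '' (I : Set A))) : Set A)) := by
  have hαL : LeftInverse α L := fun a => by simpa using hComplete a
  have hTransfer' := transfer_mul_right (map_star α)
    (map_star (PositiveLinearMap.mk₀ L.toLinearMap hLpos)) hTransfer
  have hα : LipschitzWith 1 α := AddMonoidHomClass.lipschitz_of_bound_nnnorm α 1
    (by simpa using NonUnitalStarAlgHom.nnnorm_apply_le α)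
  refine ⟨fun x hx a => ⟨?_, ?_⟩, ?_, fun h1 => hIproper ?_, fun x hx => ?_, fun x hx => ?_⟩
  · exact Set.MapsTo.closure (fun _ => mul_mem_transferSpan_left hTransfer a)
      (continuous_const_mul a) hx
  · exact Set.MapsTo.closure (fun _ => mul_mem_transferSpan_right hTransfer' a)
      (continuous_mul_const a) hx
  · obtain ⟨x, hxI, hx0⟩ := hIne
    exact ⟨x, subset_closure (iterate_mem_transferSpan hxI 0), hx0⟩
  · exact mem_of_mem_closure_of_iterate_mem hα (map_one α) hIclosed
      (fun g hg => (eventually_iterate_mem_of_mem_transferSpan hαL hinv hg).exists) h1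
  · exact Set.MapsTo.closure (fun _ => map_mem_transferSpan hαL hinv) hα.continuous hx
  · exact Set.MapsTo.closure (fun _ => apply_mem_transferSpan) L.continuous hx

/-- Let `(α, L)` be a complete C*-dynamical system over a unital C*-algebra `A`:
`α` an endomorphism, `L` a positive transfer operator with `α(L(a)) = α(1)aα(1)`.
If there is a nontrivial ideal `I` of `A` with `α(I) ⊆ I` but `α(I) ≠ α(1)Iα(1)`,
then the closure `J` of the set of sums `Σ_{k≤n} L^k(a_k)` with `a_k ∈ I` is a proper
nontrivial ideal of `A` satisfying `α(J) ⊆ J` and `L(J) ⊆ J`. -/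
theorem complete_system_noninvariant_ideal {A : Type*} [CStarAlgebra A] [PartialOrder A]
    [StarOrderedRing A] (α : A →⋆ₐ[ℂ] A) (L : A →L[ℂ] A)
    (hLpos : ∀ a : A, 0 ≤ a → 0 ≤ L a)
    (hTransfer : ∀ a b : A, L (α a * b) = a * L b)
    (hComplete : ∀ a : A, α (L a) = α 1 * a * α 1)
    (I : TwoSidedIdeal A) (hIclosed : IsClosed (I : Set A))
    (hIne : ∃ x ∈ I, x ≠ (0 : A)) (hIproper : (1 : A) ∉ I)
    (hinv : ∀ x ∈ I, α x ∈ I)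
    (hneq : ⇑α '' (I : Set A) ≠ (fun a : A => α 1 * a * α 1) '' (I : Set A)) :
    (∀ x ∈ closure (↑(AddSubgroup.closure
        (⋃ k : ℕ, (fun a : A => (⇑L)^[k] a) '' (I : Set A))) : Set A), ∀ a : A,
        a * x ∈ closure (↑(AddSubgroup.closure
          (⋃ k : ℕ, (fun a : A => (⇑L)^[k] a) '' (I : Set A))) : Set A) ∧
        x * a ∈ closure (↑(AddSubgroup.closure
          (⋃ k : ℕ, (fun a : A => (⇑L)^[k] a) '' (I : Set A))) : Set A)) ∧
    (∃ x ∈ closure (↑(AddSubgroup.closure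
        (⋃ k : ℕ, (fun a : A => (⇑L)^[k] a) '' (I : Set A))) : Set A), x ≠ (0 : A)) ∧
    (1 : A) ∉ closure (↑(AddSubgroup.closure
        (⋃ k : ℕ, (fun a : A => (⇑L)^[k] a) '' (I : Set A))) : Set A) ∧
    (∀ x ∈ closure (↑(AddSubgroup.closure
        (⋃ k : ℕ, (fun a : A => (⇑L)^[k] a) '' (I : Set A))) : Set A),
      α x ∈ closure (↑(AddSubgroup.closure
        (⋃ k : ℕ, (fun a : A => (⇑L)^[k] a) '' (I : Set A))) : Set A)) ∧
    (∀ x ∈ closure (↑(AddSubgroup.closure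
        (⋃ k : ℕ, (fun a : A => (⇑L)^[k] a) '' (I : Set A))) : Set A),
      L x ∈ closure (↑(AddSubgroup.closure
        (⋃ k : ℕ, (fun a : A => (⇑L)^[k] a) '' (I : Set A))) : Set A)) :=
  complete_system_noninvariant_ideal_general α L hLpos hTransfer hComplete I hIclosed hIne hIproper
    hinv
end

section
/- Let E be a finite directed graph with adjacency matrix A_E, and let P be the E⁰×E⁰ matrix with entries p_{v,w} = A_E(v,w)/n_w if A_E(v,w) ≠ 0 and 0 otherwise, where n_w = |r^{-1}(w)| is the number of edges with range w. Then for n ≥ 1, the n-th power P^n is partially-stochastic (every non-zero column sums to one) if and only if: for every path μ of length n and every path ν of length k < n with r(μ) = r(ν), the source s(ν) is not a source vertex of E (i.e. s(ν) ∈ r(E¹)). -/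
/-- A finite directed graph `E = (E⁰, E¹, r, s)`. -/
structure FinGraph where
  V : Type
  E : Type
  [fV : Fintype V]
  [fE : Fintype E]
  [dV : DecidableEq V]
  [dE : DecidableEq E]
  s : E → V
  r : E → V

attribute [instance] FinGraph.fV FinGraph.fE FinGraph.dV FinGraph.dE

/-- A path of length `n` in the graph `G`: `n+1` vertices joined by `n` consecutive edges. -/
structure GPath (G : FinGraph) (n : ℕ) where
  vert : Fin (n + 1) → G.V
  edge : Fin n → G.E
  src_eq : ∀ i : Fin n, G.s (edge i) = vert i.castSucc
  rng_eq : ∀ i : Fin n, G.r (edge i) = vert i.succ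

namespace GPath
variable {G : FinGraph} {n : ℕ}

/-- The source (initial vertex) of a path. -/
def src (p : GPath G n) : G.V := p.vert 0

/-- The range (final vertex) of a path. -/
def rng (p : GPath G n) : G.V := p.vert (Fin.last n)

end GPath

/-- The number of edges with range `v`. -/
def nIn (G : FinGraph) (v : G.V) : ℕ := (Finset.univ.filter (fun e => G.r e = v)).card

/-- The matrix `P` with `p_{v,w} = A_E(v,w)/n_w` (equal to `0` when `A_E(v,w) = 0`). -/
noncomputable def stochMatrix (G : FinGraph) : Matrix G.V G.V ℝ :=
  fun v w => ((Finset.univ.filter (fun e => G.s e = v ∧ G.r e = w)).card : ℝ) / (nIn G w : ℝ)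

/-- A nonnegative matrix is partially stochastic if every nonzero column sums to `1`. -/
def PartiallyStochastic {V : Type} [Fintype V] (M : Matrix V V ℝ) : Prop :=
  ∀ w : V, (∃ v, M v w ≠ 0) → ∑ v, M v w = 1

/-!
The column sums `c_n(w) = ∑ v, (P ^ n) v w` satisfy `c_0 = 1`, and `c_{n+1}(w)` is the average
of `c_n(s e)` over the edges `e` with `r e = w` (which is `0` at a source). Hence `0 ≤ c_n ≤ 1`,
and by induction on `n`: `c_n(w) ≠ 0` iff some path of length `n` ends at `w`, while
`c_n(w) = 1` iff no path of length `< n` ending at `w` starts at a source, since an average of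
numbers `≤ 1` equals `1` only if all of them do.
-/

open Finset
open scoped BigOperators Matrix

namespace GPath

variable {G : FinGraph} {n : ℕ}

def nil (v : G.V) : GPath G 0 where
  vert _ := v
  edge := Fin.elim0
  src_eq i := i.elim0
  rng_eq i := i.elim0

lemma src_eq_rng (p : GPath G 0) : p.src = p.rng := rfl

def snoc (p : GPath G n) (e : G.E) (h : G.s e = p.rng) : GPath G (n + 1) where
  vert := Fin.snoc p.vert (G.r e)
  edge := Fin.snoc p.edge e
  src_eq := Fin.lastCases (by rw [Fin.snoc_last, Fin.snoc_castSucc]; exact h)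
    fun i => by rw [Fin.snoc_castSucc, Fin.snoc_castSucc]; exact p.src_eq i
  rng_eq := Fin.lastCases (by rw [Fin.snoc_last, Fin.succ_last, Fin.snoc_last])
    fun i => by rw [Fin.snoc_castSucc, Fin.succ_castSucc, Fin.snoc_castSucc]; exact p.rng_eq i

@[simp] lemma src_snoc (p : GPath G n) (e : G.E) (h : G.s e = p.rng) :
    (p.snoc e h).src = p.src := by
  simp only [src, snoc]
  rw [← Fin.castSucc_zero, Fin.snoc_castSucc]

@[simp] lemma rng_snoc (p : GPath G n) (e : G.E) (h : G.s e = p.rng) :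
    (p.snoc e h).rng = G.r e := by
  simp [rng, snoc]

def init (p : GPath G (n + 1)) : GPath G n where
  vert i := p.vert i.castSucc
  edge i := p.edge i.castSucc
  src_eq i := p.src_eq i.castSucc
  rng_eq i := by rw [p.rng_eq i.castSucc, Fin.succ_castSucc]

@[simp] lemma src_init (p : GPath G (n + 1)) : p.init.src = p.src := rfl

lemma rng_init (p : GPath G (n + 1)) : p.init.rng = G.s (p.edge (Fin.last n)) :=
  (p.src_eq (Fin.last n)).symm

lemma rng_eq_r_edge_last (p : GPath G (n + 1)) : p.rng = G.r (p.edge (Fin.last n)) := by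
  rw [p.rng_eq, Fin.succ_last]; rfl

lemma exists_rng_eq_succ_iff {w : G.V} :
    (∃ p : GPath G (n + 1), p.rng = w) ↔
      ∃ e, G.r e = w ∧ ∃ p : GPath G n, p.rng = G.s e := by
  constructor
  · rintro ⟨p, rfl⟩
    exact ⟨p.edge (Fin.last n), p.rng_eq_r_edge_last.symm, p.init, p.rng_init⟩
  · rintro ⟨e, rfl, p, hp⟩
    exact ⟨p.snoc e hp.symm, rng_snoc ..⟩

end GPath

def NoSourceReachesWithin (G : FinGraph) (n : ℕ) (w : G.V) : Prop :=
  ∀ k < n, ∀ ν : GPath G k, ν.rng = w → ∃ e : G.E, G.r e = ν.src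

lemma noSourceReachesWithin_zero (G : FinGraph) (w : G.V) : NoSourceReachesWithin G 0 w :=
  fun _ hk => absurd hk (Nat.not_lt_zero _)

lemma noSourceReachesWithin_succ_iff {G : FinGraph} {n : ℕ} {w : G.V} :
    NoSourceReachesWithin G (n + 1) w ↔
      (∃ e, G.r e = w) ∧ ∀ e, G.r e = w → NoSourceReachesWithin G n (G.s e) := by
  constructor
  · intro h
    refine ⟨h 0 n.succ_pos (.nil w) rfl, fun e he k hk ν hν => ?_⟩
    simpa using h (k + 1) (Nat.succ_lt_succ hk) (ν.snoc e hν.symm) (by simpa using he)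
  · rintro ⟨⟨e, he⟩, h⟩ (_ | k) hk ν rfl
    · exact ⟨e, he.trans ν.src_eq_rng.symm⟩
    · simpa using h _ ν.rng_eq_r_edge_last.symm k (Nat.lt_of_succ_lt_succ hk) ν.init ν.rng_init

namespace Finset

variable {ι α : Type*} [AddCommMonoid α] [PartialOrder α] [IsOrderedCancelAddMonoid α]
  [Module ℚ≥0 α] [PosSMulStrictMono ℚ≥0 α] {s : Finset ι} {f : ι → α} {a : α}

lemma expect_eq_iff_of_le (ha : a ≠ 0) (hf : ∀ i ∈ s, f i ≤ a) :
    𝔼 i ∈ s, f i = a ↔ s.Nonempty ∧ ∀ i ∈ s, f i = a := by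
  constructor
  · intro h
    refine ⟨nonempty_iff_ne_empty.2 fun hs => ha (by simp [← h, hs]), fun i hi => ?_⟩
    by_contra hne
    exact (expect_lt hf ⟨i, hi, (hf i hi).lt_of_ne hne⟩).ne h
  · rintro ⟨hs, h⟩
    rw [expect_congr rfl h, expect_const hs]

end Finset

lemma partiallyStochastic_iff_of_nonneg {V : Type} [Fintype V] {M : Matrix V V ℝ}
    (hM : ∀ v w, 0 ≤ M v w) :
    PartiallyStochastic M ↔ ∀ w, (1 ᵥ* M) w ≠ 0 → (1 ᵥ* M) w = 1 := by
  simp only [Matrix.vecMul, dotProduct, Pi.one_apply, one_mul]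
  refine forall_congr' fun w => imp_congr_left ?_
  rw [Ne, sum_eq_zero_iff_of_nonneg fun v _ => hM v w]
  simp

section

variable {G : FinGraph}

lemma stochMatrix_nonneg (G : FinGraph) (v w : G.V) : 0 ≤ stochMatrix G v w := by
  unfold stochMatrix; positivity

lemma vecMul_stochMatrix_apply (x : G.V → ℝ) (w : G.V) :
    (x ᵥ* stochMatrix G) w = 𝔼 e ∈ univ.filter (G.r · = w), x (G.s e) := by
  have fiberwise : ∑ e ∈ univ.filter (G.r · = w), x (G.s e) =
      ∑ v, ((univ.filter fun e => G.s e = v ∧ G.r e = w).card : ℝ) * x v := by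
    rw [← sum_fiberwise _ G.s]
    refine sum_congr rfl fun v _ => ?_
    rw [sum_congr rfl fun e he => by rw [(mem_filter.1 he).2], sum_const, filter_filter,
      nsmul_eq_mul]
    simp only [and_comm]
  rw [expect_eq_sum_div_card, ← nIn, fiberwise, sum_div]
  refine sum_congr rfl fun v _ => ?_
  simp only [stochMatrix]
  ring

noncomputable def colSum (G : FinGraph) (n : ℕ) : G.V → ℝ := 1 ᵥ* stochMatrix G ^ n

lemma colSum_zero : colSum G 0 = 1 := by
  rw [colSum, pow_zero, Matrix.vecMul_one]

lemma colSum_succ (n : ℕ) (w : G.V) :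
    colSum G (n + 1) w = 𝔼 e ∈ univ.filter (G.r · = w), colSum G n (G.s e) := by
  rw [colSum, pow_succ, ← Matrix.vecMul_vecMul, vecMul_stochMatrix_apply, colSum]

lemma colSum_nonneg (n : ℕ) (w : G.V) : 0 ≤ colSum G n w :=
  sum_nonneg fun v _ =>
    mul_nonneg zero_le_one (Matrix.pow_apply_nonneg (stochMatrix_nonneg G) n v w)

lemma colSum_le_one (n : ℕ) (w : G.V) : colSum G n w ≤ 1 := by
  induction n generalizing w with
  | zero => simp [colSum_zero]
  | succ n ih =>
    rw [colSum_succ]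
    obtain hs | hs := (univ.filter (G.r · = w)).eq_empty_or_nonempty
    · simp [hs]
    · exact expect_le hs fun e _ => ih (G.s e)

lemma colSum_ne_zero_iff (n : ℕ) (w : G.V) :
    colSum G n w ≠ 0 ↔ ∃ p : GPath G n, p.rng = w := by
  induction n generalizing w with
  | zero => simpa [colSum_zero] using ⟨.nil w, rfl⟩
  | succ n ih =>
    rw [colSum_succ, Ne, expect_eq_zero_iff_of_nonneg fun e _ => colSum_nonneg n (G.s e),
      GPath.exists_rng_eq_succ_iff]
    simp [ih]

lemma colSum_eq_one_iff (n : ℕ) (w : G.V) :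
    colSum G n w = 1 ↔ NoSourceReachesWithin G n w := by
  induction n generalizing w with
  | zero => simpa [colSum_zero] using noSourceReachesWithin_zero G w
  | succ n ih =>
    rw [colSum_succ, expect_eq_iff_of_le one_ne_zero fun e _ => colSum_le_one n (G.s e),
      noSourceReachesWithin_succ_iff]
    simp [ih, filter_nonempty_iff]

end

theorem stochMatrix_pow_partiallyStochastic_iff_general (G : FinGraph) (n : ℕ) :
    PartiallyStochastic (stochMatrix G ^ n) ↔
      ∀ (μ : GPath G n) (k : ℕ), k < n → ∀ ν : GPath G k,
        GPath.rng ν = GPath.rng μ → ∃ e : G.E, G.r e = GPath.src ν := by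
  rw [partiallyStochastic_iff_of_nonneg (Matrix.pow_apply_nonneg (stochMatrix_nonneg G) n)]
  change (∀ w, colSum G n w ≠ 0 → colSum G n w = 1) ↔ _
  simp only [colSum_ne_zero_iff, colSum_eq_one_iff, NoSourceReachesWithin, forall_exists_index,
    forall_apply_eq_imp_iff]

/-- For a finite directed graph `E` and `n ≥ 1`, the `n`-th power of the matrix `P`
(`p_{v,w} = A_E(v,w)/n_w`) is partially stochastic if and only if for every path `μ` of
length `n` and every path `ν` of length `k < n` with `r(μ) = r(ν)`, the vertex `s(ν)` is
not a source of `E` (i.e. it receives an edge). -/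
theorem stochMatrix_pow_partiallyStochastic_iff (G : FinGraph) (n : ℕ) (hn : 1 ≤ n) :
    PartiallyStochastic (stochMatrix G ^ n) ↔
      ∀ (μ : GPath G n) (k : ℕ), k < n → ∀ ν : GPath G k,
        GPath.rng ν = GPath.rng μ → ∃ e : G.E, G.r e = GPath.src ν :=
  stochMatrix_pow_partiallyStochastic_iff_general G n
end

section
/- Let E be a finite directed graph with Cuntz-Krieger family {P_v}, {S_e} on a Hilbert space, and define S := Σ_{e ∈ E¹} (1/√n_{r(e)}) S_e where n_v = |r^{-1}(v)|. Then S is a partial isometry with S*S = Σ_{v ∈ r(E¹)} P_v, and setting S_e' := √n_{r(e)} · (S_e S_e*) · S recovers S_e' = S_e for all e ∈ E¹; moreover S*P_v S = Σ_{e ∈ s^{-1}(v)} P_{r(e)}/n_{r(e)} for v not a sink and S*P_v S = 0 for v a sink. -/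
/-- A Cuntz–Krieger `E`-family in a C*-algebra `B`: mutually orthogonal nonzero
projections `{P_v}` and partial isometries `{S_e}` with `S_e* S_e = P_{r(e)}` and
`P_v = Σ_{s(e)=v} S_e S_e*` for every non-sink `v`. -/
structure CKFamily (G : FinGraph) (B : Type*) [CStarAlgebra B] where
  P : G.V → B
  S : G.E → B
  P_ne : ∀ v : G.V, P v ≠ 0
  P_sa : ∀ v : G.V, star (P v) = P v
  P_idem : ∀ v : G.V, P v * P v = P v
  P_orth : ∀ v w : G.V, v ≠ w → P v * P w = 0
  SS : ∀ e : G.E, star (S e) * S e = P (G.r e)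
  CK : ∀ v : G.V, (∃ e : G.E, G.s e = v) →
    P v = ∑ e ∈ Finset.univ.filter (fun e => G.s e = v), S e * star (S e)

/-- The partial isometry `S_μ = S_{μ₁} ⋯ S_{μ_n}` associated to a path `μ`. -/
def CKFamily.SP {G : FinGraph} {B : Type*} [CStarAlgebra B] (F : CKFamily G B)
    {n : ℕ} (p : GPath G n) : B :=
  (List.ofFn (fun i : Fin n => F.S (p.edge i))).prod

/-! The ranges `S_e S_e*` of the edges leaving `v` are star projections summing to the star
projection `P_v`, so in the order of the C⋆-algebra they lie below `P_v` and are mutually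
orthogonal. Together with the orthogonality of the `P_v` this gives `S_e* S_f = 0` for `e ≠ f`,
so all cross terms of `S* S` and `S* P_v S` vanish and the diagonal terms are
`P_{r(e)} / n_{r(e)}`; the `n_v` edges entering `v` then add up to exactly `P_v`. Since
`S_e P_{r(e)} = S_e`, this makes `S` a partial isometry, and `S_e S_e*` picks out the `e`-th
summand of `S`. -/

namespace IsStarProjection

variable {A : Type*} [NonUnitalCStarAlgebra A] [PartialOrder A] [StarOrderedRing A] {p q r : A}

lemma mul_eq_zero_of_add_le (hp : IsStarProjection p) (hq : IsStarProjection q)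
    (hr : IsStarProjection r) (h : p + q ≤ r) : q * p = 0 := by
  have hpr : p ≤ r := (le_add_of_nonneg_right hq.nonneg).trans h
  have hqr : q ≤ r := (le_add_of_nonneg_left hp.nonneg).trans h
  have hrp : IsStarProjection (r - p) := (hp.le_iff_sub hr).mp hpr
  have hq_rp : q * (r - p) = q := (hq.le_iff_mul_eq_left hrp).mp (le_sub_iff_add_le'.mpr h)
  rwa [mul_sub, (hq.le_iff_mul_eq_left hr).mp hqr, sub_eq_self] at hq_rp

end IsStarProjection

section SumOfStarProjections

variable {ι A : Type*} [NonUnitalCStarAlgebra A] {s : Finset ι} {p : ι → A}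

lemma sum_mul_eq_self_of_isStarProjection_sum (hp : ∀ i ∈ s, IsStarProjection (p i))
    (hsum : IsStarProjection (∑ i ∈ s, p i)) {i : ι} (hi : i ∈ s) :
    (∑ j ∈ s, p j) * p i = p i := by
  let _ := CStarAlgebra.spectralOrder A
  have := CStarAlgebra.spectralOrderedRing A
  exact ((hp i hi).le_iff_mul_eq_right hsum).mp <|
    Finset.single_le_sum (fun j hj => (hp j hj).nonneg) hi

lemma mul_eq_zero_of_isStarProjection_sum (hp : ∀ i ∈ s, IsStarProjection (p i))
    (hsum : IsStarProjection (∑ i ∈ s, p i)) {i j : ι} (hi : i ∈ s) (hj : j ∈ s)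
    (hij : i ≠ j) : p i * p j = 0 := by
  classical
  let _ := CStarAlgebra.spectralOrder A
  have := CStarAlgebra.spectralOrderedRing A
  refine (hp j hj).mul_eq_zero_of_add_le (hp i hi) hsum ?_
  rw [add_comm, ← Finset.sum_pair hij]
  exact Finset.sum_le_sum_of_subset_of_nonneg (Finset.insert_subset hi (by simpa using hj))
    fun k hk _ => (hp k hk).nonneg

end SumOfStarProjections

lemma mul_star_mul_self_of_isIdempotentElem {A : Type*} [NonUnitalNormedRing A] [StarRing A]
    [CStarRing A] {a : A} (h : IsIdempotentElem (star a * a)) : a * star a * a = a := by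
  have hdefect : star (a * (star a * a) - a) * (a * (star a * a) - a) = 0 :=
    calc star (a * (star a * a) - a) * (a * (star a * a) - a)
        = (star a * a) * (star a * a) * (star a * a) - (star a * a) * (star a * a)
            - (star a * a) * (star a * a) + star a * a := by
          simp only [star_sub, star_mul, star_star]
          noncomm_ring
      _ = 0 := by rw [h.eq, h.eq]; abel
  rw [mul_assoc, ← sub_eq_zero, ← CStarRing.star_mul_self_eq_zero_iff, hdefect]

lemma Finset.sum_inv_card_fiber_smul {α β K M : Type*} [Fintype α] [Fintype β] [DecidableEq β]
    [DivisionSemiring K] [CharZero K] [AddCommMonoid M] [Module K M] (f : α → β) (x : β → M) :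
    ∑ a, ((Finset.univ.filter (fun a' => f a' = f a)).card : K)⁻¹ • x (f a) =
      ∑ b ∈ Finset.univ.filter (fun b => ∃ a, f a = b), x b := by
  rw [← Finset.sum_fiberwise Finset.univ f, Finset.sum_filter]
  refine Finset.sum_congr rfl fun b _ => ?_
  have hfiber : ∀ a ∈ Finset.univ.filter (fun a => f a = b),
      ((Finset.univ.filter (fun a' => f a' = f a)).card : K)⁻¹ • x (f a) =
        ((Finset.univ.filter (fun a => f a = b)).card : K)⁻¹ • x b := by
    intro a ha
    rw [(Finset.mem_filter.mp ha).2]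
  rw [Finset.sum_congr rfl hfiber, Finset.sum_const, ← Nat.cast_smul_eq_nsmul K, smul_smul]
  split_ifs with hb
  · obtain ⟨a, rfl⟩ := hb
    have hcard : ((Finset.univ.filter (fun a' => f a' = f a)).card : K) ≠ 0 :=
      Nat.cast_ne_zero.mpr (Finset.card_ne_zero.mpr ⟨a, by simp⟩)
    rw [mul_inv_cancel₀ hcard, one_smul]
  · rw [Finset.filter_false_of_mem fun a _ h => hb ⟨a, h⟩]
    simp

namespace CKFamily

variable {G : FinGraph} {B : Type*} [CStarAlgebra B] (F : CKFamily G B)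

lemma isStarProjection_P (v : G.V) : IsStarProjection (F.P v) := ⟨F.P_idem v, F.P_sa v⟩

lemma S_mul_star_S_mul_S (e : G.E) : F.S e * star (F.S e) * F.S e = F.S e :=
  mul_star_mul_self_of_isIdempotentElem (by rw [F.SS]; exact F.P_idem _)

lemma isStarProjection_S_mul_star_S (e : G.E) : IsStarProjection (F.S e * star (F.S e)) where
  isIdempotentElem := by rw [IsIdempotentElem, ← mul_assoc, S_mul_star_S_mul_S]
  isSelfAdjoint := IsSelfAdjoint.mul_star_self _

lemma S_mul_P_self (e : G.E) : F.S e * F.P (G.r e) = F.S e := by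
  rw [← F.SS, ← mul_assoc, S_mul_star_S_mul_S]

lemma S_mul_P_of_ne {e : G.E} {v : G.V} (h : v ≠ G.r e) : F.S e * F.P v = 0 := by
  rw [← S_mul_P_self, mul_assoc, F.P_orth _ _ h.symm, mul_zero]

lemma P_mul_S_mul_star_S (e : G.E) :
    F.P (G.s e) * (F.S e * star (F.S e)) = F.S e * star (F.S e) := by
  have hP := F.CK (G.s e) ⟨e, rfl⟩
  rw [hP]
  exact sum_mul_eq_self_of_isStarProjection_sum
    (fun f _ => F.isStarProjection_S_mul_star_S f) (hP ▸ F.isStarProjection_P _) (by simp)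

lemma P_mul_S_self (e : G.E) : F.P (G.s e) * F.S e = F.S e := by
  rw [← S_mul_star_S_mul_S, ← mul_assoc, P_mul_S_mul_star_S]

lemma P_mul_S_of_ne {v : G.V} {e : G.E} (h : v ≠ G.s e) : F.P v * F.S e = 0 := by
  rw [← P_mul_S_self, ← mul_assoc, F.P_orth _ _ h, zero_mul]

lemma star_S_mul_P_self (e : G.E) : star (F.S e) * F.P (G.s e) = star (F.S e) := by
  simpa [F.P_sa] using congrArg star (F.P_mul_S_self e)

lemma star_S_mul_S_mul_star_S (e : G.E) : star (F.S e) * F.S e * star (F.S e) = star (F.S e) := by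
  simpa [mul_assoc] using congrArg star (F.S_mul_star_S_mul_S e)

lemma star_S_mul_S_of_ne {e f : G.E} (h : e ≠ f) : star (F.S e) * F.S f = 0 := by
  by_cases hs : G.s e = G.s f
  · have hP := F.CK (G.s e) ⟨e, rfl⟩
    have hQ : F.S e * star (F.S e) * (F.S f * star (F.S f)) = 0 :=
      mul_eq_zero_of_isStarProjection_sum (fun g _ => F.isStarProjection_S_mul_star_S g)
        (hP ▸ F.isStarProjection_P _) (by simp) (by simp [hs]) h
    calc star (F.S e) * F.S f
        = star (F.S e) * F.S e * star (F.S e) * (F.S f * star (F.S f) * F.S f) := by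
          rw [star_S_mul_S_mul_star_S, S_mul_star_S_mul_S]
      _ = star (F.S e) * (F.S e * star (F.S e) * (F.S f * star (F.S f))) * F.S f := by
          simp only [mul_assoc]
      _ = 0 := by rw [hQ, mul_zero, zero_mul]
  · calc star (F.S e) * F.S f = star (F.S e) * F.P (G.s e) * (F.P (G.s f) * F.S f) := by
          rw [star_S_mul_P_self, P_mul_S_self]
      _ = star (F.S e) * (F.P (G.s e) * F.P (G.s f)) * F.S f := by simp only [mul_assoc]
      _ = 0 := by rw [F.P_orth _ _ hs, mul_zero, zero_mul]

lemma star_sum_smul_S_mul_sum_smul_S (s : Finset G.E) (c : G.E → ℂ) :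
    star (∑ e ∈ s, c e • F.S e) * ∑ e ∈ s, c e • F.S e =
      ∑ e ∈ s, (star (c e) * c e) • F.P (G.r e) := by
  simp only [star_sum, star_smul, Finset.sum_mul_sum, smul_mul_smul_comm]
  refine Finset.sum_congr rfl fun e he => ?_
  rw [Finset.sum_eq_single_of_mem e he
    fun f _ hf => by rw [F.star_S_mul_S_of_ne hf.symm, smul_zero], F.SS]

lemma P_mul_sum_smul_S (v : G.V) (c : G.E → ℂ) :
    F.P v * ∑ e, c e • F.S e = ∑ e ∈ Finset.univ.filter (fun e => G.s e = v), c e • F.S e := by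
  rw [Finset.mul_sum, Finset.sum_filter]
  refine Finset.sum_congr rfl fun e _ => ?_
  rw [mul_smul_comm]
  split_ifs with he
  · rw [← he, P_mul_S_self]
  · rw [F.P_mul_S_of_ne (Ne.symm he), smul_zero]

lemma star_sum_smul_S_mul_P_mul_sum_smul_S (v : G.V) (c : G.E → ℂ) :
    star (∑ e, c e • F.S e) * F.P v * ∑ e, c e • F.S e =
      ∑ e ∈ Finset.univ.filter (fun e => G.s e = v), (star (c e) * c e) • F.P (G.r e) := by
  have hP := F.isStarProjection_P v
  rw [← star_sum_smul_S_mul_sum_smul_S, ← P_mul_sum_smul_S, star_mul, hP.isSelfAdjoint.star_eq,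
    ← mul_assoc, mul_assoc _ (F.P v) (F.P v), hP.isIdempotentElem.eq]

lemma S_mul_star_S_mul_sum_smul_S (e : G.E) (c : G.E → ℂ) :
    F.S e * star (F.S e) * ∑ f, c f • F.S f = c e • F.S e := by
  rw [Finset.mul_sum, Finset.sum_eq_single e
      (fun f _ hf => by rw [mul_smul_comm, mul_assoc, F.star_S_mul_S_of_ne hf.symm, mul_zero,
        smul_zero]) (by simp),
    mul_smul_comm, S_mul_star_S_mul_S]

lemma sum_smul_S_mul_sum_P (c : G.E → ℂ) {R : Finset G.V} (hR : ∀ e, G.r e ∈ R) :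
    (∑ e, c e • F.S e) * ∑ v ∈ R, F.P v = ∑ e, c e • F.S e := by
  rw [Finset.sum_mul]
  refine Finset.sum_congr rfl fun e _ => ?_
  rw [smul_mul_assoc, Finset.mul_sum, Finset.sum_eq_single_of_mem _ (hR e)
    fun v _ hv => F.S_mul_P_of_ne hv, S_mul_P_self]

end CKFamily

/-- For a Cuntz–Krieger `E`-family `{P_v}, {S_e}` on a Hilbert space, the operator
`S = Σ_e n_{r(e)}^{-1/2} S_e` is a partial isometry with `S*S = Σ_{v ∈ r(E¹)} P_v`,
one recovers `S_e = √n_{r(e)} (S_e S_e*) S`, and `S* P_v S = Σ_{s(e)=v} P_{r(e)}/n_{r(e)}`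
for `v` not a sink while `S* P_v S = 0` for `v` a sink. -/
theorem ck_family_averaged_partial_isometry {G : FinGraph}
    {H : Type} [NormedAddCommGroup H] [InnerProductSpace ℂ H] [CompleteSpace H]
    (F : CKFamily G (H →L[ℂ] H)) :
    (∑ e : G.E, (((Real.sqrt (nIn G (G.r e)) : ℝ) : ℂ))⁻¹ • F.S e) *
        star (∑ e : G.E, (((Real.sqrt (nIn G (G.r e)) : ℝ) : ℂ))⁻¹ • F.S e) *
        (∑ e : G.E, (((Real.sqrt (nIn G (G.r e)) : ℝ) : ℂ))⁻¹ • F.S e) =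
      (∑ e : G.E, (((Real.sqrt (nIn G (G.r e)) : ℝ) : ℂ))⁻¹ • F.S e) ∧
    star (∑ e : G.E, (((Real.sqrt (nIn G (G.r e)) : ℝ) : ℂ))⁻¹ • F.S e) *
        (∑ e : G.E, (((Real.sqrt (nIn G (G.r e)) : ℝ) : ℂ))⁻¹ • F.S e) =
      ∑ v ∈ Finset.univ.filter (fun v => ∃ e : G.E, G.r e = v), F.P v ∧
    (∀ e : G.E,
      ((Real.sqrt (nIn G (G.r e)) : ℝ) : ℂ) • (F.S e * star (F.S e) *
        (∑ f : G.E, (((Real.sqrt (nIn G (G.r f)) : ℝ) : ℂ))⁻¹ • F.S f)) = F.S e) ∧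
    (∀ v : G.V, (∃ e : G.E, G.s e = v) →
      star (∑ e : G.E, (((Real.sqrt (nIn G (G.r e)) : ℝ) : ℂ))⁻¹ • F.S e) * F.P v *
          (∑ e : G.E, (((Real.sqrt (nIn G (G.r e)) : ℝ) : ℂ))⁻¹ • F.S e) =
        ∑ e ∈ Finset.univ.filter (fun e => G.s e = v),
          ((nIn G (G.r e) : ℂ))⁻¹ • F.P (G.r e)) ∧
    (∀ v : G.V, (∀ e : G.E, G.s e ≠ v) →
      star (∑ e : G.E, (((Real.sqrt (nIn G (G.r e)) : ℝ) : ℂ))⁻¹ • F.S e) * F.P v *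
        (∑ e : G.E, (((Real.sqrt (nIn G (G.r e)) : ℝ) : ℂ))⁻¹ • F.S e) = 0) := by
  have hweight (n : ℕ) : star (((√(n : ℝ) : ℝ) : ℂ)⁻¹) * ((√(n : ℝ) : ℝ) : ℂ)⁻¹ = (n : ℂ)⁻¹ := by
    rw [Complex.star_def, map_inv₀, Complex.conj_ofReal, ← mul_inv, ← Complex.ofReal_mul,
      Real.mul_self_sqrt n.cast_nonneg, Complex.ofReal_natCast]
  have hsqrt (e : G.E) : ((√(nIn G (G.r e) : ℝ) : ℝ) : ℂ) ≠ 0 := by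
    have : 0 < nIn G (G.r e) := Finset.card_pos.mpr ⟨e, by simp⟩
    exact_mod_cast (Real.sqrt_pos.mpr (Nat.cast_pos.mpr this)).ne'
  have hTT : star (∑ e : G.E, (((Real.sqrt (nIn G (G.r e)) : ℝ) : ℂ))⁻¹ • F.S e) *
      (∑ e : G.E, (((Real.sqrt (nIn G (G.r e)) : ℝ) : ℂ))⁻¹ • F.S e) =
        ∑ v ∈ Finset.univ.filter (fun v => ∃ e : G.E, G.r e = v), F.P v := by
    rw [F.star_sum_smul_S_mul_sum_smul_S]
    simp_rw [hweight]
    exact Finset.sum_inv_card_fiber_smul G.r F.P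
  refine ⟨?_, hTT, fun e => ?_, fun v _ => ?_, fun v hv => ?_⟩
  · rw [mul_assoc, hTT]
    exact F.sum_smul_S_mul_sum_P _ fun e => by simp
  · rw [F.S_mul_star_S_mul_sum_smul_S, smul_smul, mul_inv_cancel₀ (hsqrt e), one_smul]
  · rw [F.star_sum_smul_S_mul_P_mul_sum_smul_S]
    simp_rw [hweight]
  · rw [F.star_sum_smul_S_mul_P_mul_sum_smul_S, Finset.filter_false_of_mem fun e _ => hv e,
      Finset.sum_empty]
end
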